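/- arXiv:1011.6055 — 2 statements merged into one kernel-verified Lean document; each statement's English description precedes it below -/
import Mathlib

section
/- Two nonzero rank-one operators x₁⊙y₁ on a Hilbert space E₁ and x₂⊙y₂ on a Hilbert space E₂ are unitarily equivalent if and only if: dim E₁ = dim E₂, ‖x₁‖‖y₁‖ = ‖x₂‖‖y₂‖, and ⟨x₁, y₁⟩ = ⟨x₂, y₂⟩. -/
open MeasureTheory Complex Submodule
open scoped ENNReal
open scoped ComplexConjugate

noncomputable section

instance : Fact (0 < 2 * Real.pi) := ⟨by positivity⟩

abbrev 𝕋m := AddCircle (2 * Real.pi)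
abbrev μT : Measure 𝕋m := AddCircle.haarAddCircle
abbrev L2 : Type := Lp ℂ 2 μT

open scoped Classical in
/-- Embedding of a.e.-defined functions into `L²`, with junk value `0` when not in `L²`. -/
def toL2 (g : 𝕋m → ℂ) : L2 := if h : MemLp g 2 μT then h.toLp g else 0

/-- The coordinate function `z^j` on the circle. -/
def zc (j : ℤ) : 𝕋m → ℂ := fun x => fourier j x

/-- Pointwise product in `L²` (junk value if the product is not square integrable). -/
def mulL2 (f g : L2) : L2 := toL2 (fun x => f x * g x)

/-- Essential boundedness. -/
def BddAE (f : L2) : Prop := ∃ C : ℝ, ∀ᵐ x ∂μT, ‖f x‖ ≤ C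

/-- The span of the negative frequencies. -/
def negSpan : Submodule ℂ L2 :=
  Submodule.span ℂ {f : L2 | ∃ n : ℤ, n < 0 ∧ f = fourierLp 2 n}

/-- The Hardy space `H²` inside `L²(𝕋)`. -/
def H2 : Submodule ℂ L2 := negSpanᗮ

/-- The subspace `w·V` of `L²`. -/
def mulSet (w : 𝕋m → ℂ) (V : Submodule ℂ L2) : Submodule ℂ L2 :=
  Submodule.span ℂ {f : L2 | ∃ g ∈ V, f = toL2 (fun x => w x * g x)}

/-- The subspace `Θ·H²` of `L²`. -/
def SH2 (Θ : L2) : Submodule ℂ L2 := mulSet (⇑Θ) H2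

/-- An inner function: a member of `H²` with unimodular boundary values. -/
def IsInner (Θ : L2) : Prop := Θ ∈ H2 ∧ ∀ᵐ x ∂μT, ‖Θ x‖ = 1

/-- The model space `K_Θ = H² ⊖ ΘH²`, realized as an orthogonal complement. -/
def Ksp (Θ : L2) : Submodule ℂ L2 := (negSpan ⊔ SH2 Θ)ᗮ

instance KspComplete (Θ : L2) : CompleteSpace (Ksp Θ) :=
  inferInstanceAs (CompleteSpace ((negSpan ⊔ SH2 Θ)ᗮ))

instance KspHasProj (Θ : L2) : HasOrthogonalProjection (Ksp Θ) :=
  HasOrthogonalProjection.ofCompleteSpace (Ksp Θ)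

/-- The orthogonal projection of `L²` onto `K_Θ`. -/
def PK (Θ : L2) : L2 →L[ℂ] Ksp Θ := orthogonalProjection (Ksp Θ)

/-- The truncated Toeplitz operator with symbol `φ`, with values in `K_Θ`. -/
def TTOsub (Θ φ : L2) (f : L2) : Ksp Θ := PK Θ (toL2 (fun x => φ x * f x))

/-- The truncated Toeplitz operator with symbol `φ`, as an `L²`-valued map. -/
def TTO (Θ φ : L2) (f : L2) : L2 := (TTOsub Θ φ f : L2)

/-- `T` is the (necessarily bounded) extension of the truncated Toeplitz operator `A_φ^Θ`
from its dense domain `K_Θ ∩ H^∞`. -/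
def ExtendsTTO (Θ φ : L2) (T : Ksp Θ →L[ℂ] Ksp Θ) : Prop :=
  ∀ f : Ksp Θ, BddAE (f : L2) → T f = TTOsub Θ φ (f : L2)

/-- The truncated Toeplitz operator `A_φ^Θ` is bounded. -/
def IsBddTTO (Θ φ : L2) : Prop := ∃ T : Ksp Θ →L[ℂ] Ksp Θ, ExtendsTTO Θ φ T

/-- The truncated Toeplitz operator `A_φ^Θ` is zero (on its dense domain). -/
def TTOIsZero (Θ φ : L2) : Prop := ∀ f : L2, f ∈ Ksp Θ → BddAE f → TTO Θ φ f = 0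

/-- `Θ(0)`, the value at the origin of the holomorphic extension. -/
def mval (f : L2) : ℂ := fourierCoeff (⇑f) 0

/-- `Θ'(0)`, the derivative at the origin of the holomorphic extension. -/
def dval (f : L2) : ℂ := fourierCoeff (⇑f) 1

/-- The reproducing kernel `k_0^Θ` of `K_Θ` at `0`. -/
def k0 (Θ : L2) : L2 := toL2 (fun x => 1 - conj (mval Θ) * Θ x)

/-- The conjugate kernel `k̃_0^Θ = (Θ - Θ(0))/z`. -/
def kt0 (Θ : L2) : L2 := toL2 (fun x => (Θ x - mval Θ) * conj (zc 1 x))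

/-- The power `B^j` (boundary values; for `j < 0` this is the conjugate power a.e.). -/
def BpowL2 (B : L2) (j : ℤ) : L2 := toL2 (fun x => B x ^ j)

/-- The composition `f ∘ B` determined by `z^j ↦ B^j`:  `f∘B = ∑ c_j(f) B^j`. -/
def compB (B f : L2) : L2 := ∑' j : ℤ, fourierCoeff (⇑f) j • BpowL2 B j

/-- The concrete realization of the Hilbert tensor product `K_B ⊗ L²` as `ℓ²(ℤ, K_B)`,
via the Fourier basis of the second factor. -/
abbrev TensKB (B : L2) : Type := lp (fun _ : ℤ => Ksp B) 2

/-- The elementary tensor `h ⊗ f ∈ K_B ⊗ L²` in the realization `ℓ²(ℤ, K_B)`. -/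
def elemTensor (B : L2) (h : Ksp B) (f : L2) : TensKB B :=
  ⟨fun j => fourierCoeff (⇑f) j • h, by
    apply memℓp_gen
    have h1 : Summable fun j : ℤ =>
        ‖(fourierBasis (hT := ⟨by positivity⟩)).repr f j‖ ^ (2 : ℝ≥0∞).toReal :=
      (memℓp_gen_iff (by norm_num)).1 (lp.memℓp ((fourierBasis (hT := ⟨by positivity⟩)).repr f))
    have h2 := h1.mul_right (‖h‖ ^ (2 : ℝ≥0∞).toReal)
    apply Summable.congr h2
    intro j
    rw [fourierBasis_repr]
    rw [norm_smul, ← Real.mul_rpow (norm_nonneg _) (norm_nonneg _)]⟩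

/-- The closed subspace `K_B ⊗ M` of `K_B ⊗ L² = ℓ²(ℤ, K_B)`. -/
def tensSp (B : L2) (M : Submodule ℂ L2) : Submodule ℂ (TensKB B) :=
  (Submodule.span ℂ {x : TensKB B | ∃ h : Ksp B, ∃ f ∈ M, x = elemTensor B h f}).topologicalClosure

/-- The set of complex conjugates of the members of `V`. -/
def conjSM (V : Submodule ℂ L2) : Submodule ℂ L2 :=
  Submodule.span ℂ {f : L2 | ∃ g ∈ V, f = toL2 (fun x => conj (g x))}

/-- The kernel of the truncated Toeplitz operator `A_φ^Θ`, inside `K_Θ`. -/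
def kerTTO (Θ φ : L2) : Submodule ℂ L2 :=
  Submodule.span ℂ {f : L2 | f ∈ Ksp Θ ∧ TTO Θ φ f = 0}

/-! Conjugating `x ⊙ y = rankOne ℂ x y` by a unitary `U` gives `(U x) ⊙ (U y)`; since
`‖x ⊙ y‖ = ‖x‖ ‖y‖` and `(x ⊙ y)² = ⟪y, x⟫ • (x ⊙ y)`, both quantities are unitary invariants.
Conversely, after transporting `(x₁, y₁)` to `E₂` and rescaling `(x₂, y₂)` to `(r x₂, r⁻¹ y₂)`
with `r = ‖x₁‖ / ‖x₂‖`, which leaves `x₂ ⊙ y₂` unchanged, the two pairs have the same Gram matrix.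
Families with equal Gram matrices are moved into each other by a unitary, built on the
finite-dimensional span of both families and extended by the identity on its orthogonal
complement. -/

open InnerProductSpace

section ExtendById

variable {𝕜 E : Type*} [RCLike 𝕜] [NormedAddCommGroup E] [InnerProductSpace 𝕜 E]
  {K : Submodule 𝕜 E} [K.HasOrthogonalProjection]

namespace LinearMap

def extendById (ψ : K →ₗ[𝕜] K) : E →ₗ[𝕜] E :=
  K.subtype ∘ₗ ψ ∘ₗ K.orthogonalProjectionOnto.toLinearMap + Kᗮ.starProjection.toLinearMap

variable (ψ : K →ₗ[𝕜] K)

theorem extendById_apply (x : E) :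
    ψ.extendById x = ψ (K.orthogonalProjectionOnto x) + Kᗮ.starProjection x := rfl

theorem orthogonalProjectionOnto_extendById (x : E) :
    K.orthogonalProjectionOnto (ψ.extendById x) = ψ (K.orthogonalProjectionOnto x) := by
  rw [extendById_apply, map_add, orthogonalProjectionOnto_mem_subspace_eq_self,
    orthogonalProjectionOnto_apply_of_mem_orthogonal (Kᗮ.starProjection_apply_mem x), add_zero]

theorem orthogonalProjectionOnto_orthogonal_extendById (x : E) :
    Kᗮ.orthogonalProjectionOnto (ψ.extendById x) = Kᗮ.orthogonalProjectionOnto x := by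
  rw [extendById_apply, map_add, orthogonalProjectionOnto_orthogonal_apply_eq_zero (ψ _).2,
    zero_add, starProjection_apply, orthogonalProjectionOnto_mem_subspace_eq_self]

theorem extendById_extendById {χ : K →ₗ[𝕜] K} (h : ∀ k, χ (ψ k) = k) (x : E) :
    χ.extendById (ψ.extendById x) = x := by
  rw [extendById_apply χ, orthogonalProjectionOnto_extendById, h, starProjection_apply,
    orthogonalProjectionOnto_orthogonal_extendById]
  exact K.starProjection_add_starProjection_orthogonal x

theorem norm_extendById (hψ : ∀ k, ‖ψ k‖ = ‖k‖) (x : E) : ‖ψ.extendById x‖ = ‖x‖ := by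
  have hsq := norm_sq_eq_add_norm_sq_projection (ψ.extendById x) K
  rw [orthogonalProjectionOnto_orthogonal_extendById, orthogonalProjectionOnto_extendById, hψ,
    ← norm_sq_eq_add_norm_sq_projection] at hsq
  exact (sq_eq_sq₀ (norm_nonneg _) (norm_nonneg _)).1 hsq

end LinearMap

def LinearIsometryEquiv.extendById (φ : K ≃ₗᵢ[𝕜] K) : E ≃ₗᵢ[𝕜] E :=
  { (φ.toLinearEquiv : K →ₗ[𝕜] K).extendById with
    invFun := (φ.symm.toLinearEquiv : K →ₗ[𝕜] K).extendById
    left_inv := LinearMap.extendById_extendById _ φ.symm_apply_apply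
    right_inv := LinearMap.extendById_extendById _ φ.apply_symm_apply
    norm_map' := LinearMap.norm_extendById _ φ.norm_map }

theorem LinearIsometryEquiv.extendById_apply_coe (φ : K ≃ₗᵢ[𝕜] K) (k : K) :
    φ.extendById (k : E) = φ k := by
  simp [extendById, LinearMap.extendById_apply, orthogonalProjectionOnto_mem_subspace_eq_self]

end ExtendById

section Gram

variable {𝕜 E : Type*} [RCLike 𝕜] [NormedAddCommGroup E] [InnerProductSpace 𝕜 E]
  {ι : Type*} [Fintype ι] {v w : ι → E}

theorem inner_linearCombination_eq_of_inner_eq (h : ∀ i j, ⟪v i, v j⟫_𝕜 = ⟪w i, w j⟫_𝕜)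
    (c d : ι → 𝕜) :
    ⟪Fintype.linearCombination 𝕜 v c, Fintype.linearCombination 𝕜 v d⟫_𝕜 =
      ⟪Fintype.linearCombination 𝕜 w c, Fintype.linearCombination 𝕜 w d⟫_𝕜 := by
  simp only [Fintype.linearCombination_apply, sum_inner, inner_sum, inner_smul_left,
    inner_smul_right, h]

theorem exists_linearIsometry_range_linearCombination
    (h : ∀ i j, ⟪v i, v j⟫_𝕜 = ⟪w i, w j⟫_𝕜) :
    ∃ L : LinearMap.range (Fintype.linearCombination 𝕜 v) →ₗᵢ[𝕜] E, ∀ c,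
      L ⟨_, LinearMap.mem_range_self _ c⟩ = Fintype.linearCombination 𝕜 w c := by
  set Lv := Fintype.linearCombination 𝕜 v
  set Lw := Fintype.linearCombination 𝕜 w
  have hker : LinearMap.ker Lv ≤ LinearMap.ker Lw := fun c hc => by
    rw [LinearMap.mem_ker, ← inner_self_eq_zero (𝕜 := 𝕜),
      ← inner_linearCombination_eq_of_inner_eq h, LinearMap.mem_ker.1 hc, inner_zero_left]
  set f := (LinearMap.ker Lv).liftQ Lw hker ∘ₗ Lv.quotKerEquivRange.symm.toLinearMap
  have hf : ∀ c, f ⟨Lv c, LinearMap.mem_range_self _ c⟩ = Lw c := fun c => by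
    simp [f, LinearMap.quotKerEquivRange_symm_apply_image]
  refine ⟨f.isometryOfInner ?_, hf⟩
  rintro ⟨_, c, rfl⟩ ⟨_, d, rfl⟩
  rw [hf, hf, Submodule.coe_inner]
  exact (inner_linearCombination_eq_of_inner_eq h c d).symm

theorem exists_linearIsometryEquiv_apply_eq_of_inner_eq_of_finiteDimensional
    [FiniteDimensional 𝕜 E] (h : ∀ i j, ⟪v i, v j⟫_𝕜 = ⟪w i, w j⟫_𝕜) :
    ∃ U : E ≃ₗᵢ[𝕜] E, ∀ i, U (v i) = w i := by
  classical
  obtain ⟨L, hL⟩ := exists_linearIsometry_range_linearCombination h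
  refine ⟨L.extend.toLinearIsometryEquiv rfl, fun i => ?_⟩
  have := L.extend_apply ⟨_, LinearMap.mem_range_self _ (Pi.single i 1)⟩
  rw [hL] at this
  simpa [Fintype.linearCombination_apply_single] using this

theorem exists_linearIsometryEquiv_apply_eq_of_inner_eq
    (h : ∀ i j, ⟪v i, v j⟫_𝕜 = ⟪w i, w j⟫_𝕜) : ∃ U : E ≃ₗᵢ[𝕜] E, ∀ i, U (v i) = w i := by
  set G := span 𝕜 (Set.range v ∪ Set.range w)
  have : FiniteDimensional 𝕜 G :=
    FiniteDimensional.span_of_finite 𝕜 ((Set.finite_range v).union (Set.finite_range w))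
  have hv (i : ι) : v i ∈ G := subset_span (Or.inl ⟨i, rfl⟩)
  have hw (i : ι) : w i ∈ G := subset_span (Or.inr ⟨i, rfl⟩)
  obtain ⟨φ, hφ⟩ := exists_linearIsometryEquiv_apply_eq_of_inner_eq_of_finiteDimensional
    (v := fun i => (⟨v i, hv i⟩ : G)) (w := fun i => ⟨w i, hw i⟩) h
  refine ⟨φ.extendById, fun i => ?_⟩
  rw [show v i = ((⟨v i, hv i⟩ : G) : E) from rfl, φ.extendById_apply_coe, hφ]

end Gram

section RankOne

variable {𝕜 E F : Type*} [RCLike 𝕜] [NormedAddCommGroup E] [InnerProductSpace 𝕜 E]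
  [NormedAddCommGroup F] [InnerProductSpace 𝕜 F]

theorem exists_linearIsometryEquiv_apply_eq_pair {a b c d : E} (ha : ‖a‖ = ‖c‖) (hb : ‖b‖ = ‖d‖)
    (hab : ⟪a, b⟫_𝕜 = ⟪c, d⟫_𝕜) : ∃ V : E ≃ₗᵢ[𝕜] E, V a = c ∧ V b = d := by
  have hba : ⟪b, a⟫_𝕜 = ⟪d, c⟫_𝕜 := by rw [← inner_conj_symm, hab, inner_conj_symm]
  obtain ⟨V, hV⟩ := exists_linearIsometryEquiv_apply_eq_of_inner_eq (𝕜 := 𝕜)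
    (v := ![a, b]) (w := ![c, d]) (by
      intro i j
      fin_cases i <;> fin_cases j <;> simp [inner_self_eq_norm_sq_to_K, ha, hb, hab, hba])
  exact ⟨V, hV 0, hV 1⟩

theorem LinearIsometryEquiv.map_rankOne_apply (U : E ≃ₗᵢ[𝕜] F) (x y ξ : E) :
    U (rankOne 𝕜 x y ξ) = rankOne 𝕜 (U x) (U y) (U ξ) := by
  simp [U.inner_map_map]

theorem LinearIsometryEquiv.map_rankOne_apply_eq_iff (U : E ≃ₗᵢ[𝕜] F) (x y : E) (x' y' : F) :
    (∀ ξ, U (rankOne 𝕜 x y ξ) = rankOne 𝕜 x' y' (U ξ)) ↔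
      rankOne 𝕜 (U x) (U y) = rankOne 𝕜 x' y' := by
  simp only [U.map_rankOne_apply, ContinuousLinearMap.ext_iff, U.surjective.forall]

theorem inner_eq_of_rankOne_eq_rankOne {a b c d : E} (h : rankOne 𝕜 a b = rankOne 𝕜 c d) :
    ⟪b, a⟫_𝕜 = ⟪d, c⟫_𝕜 := by
  by_cases h0 : rankOne 𝕜 a b = 0
  · have hcd := h ▸ h0
    rw [rankOne_eq_zero] at h0 hcd
    rcases h0 with rfl | rfl <;> rcases hcd with rfl | rfl <;> simp
  · have hsq := congrArg (fun T => T ∘L T) h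
    simp only [rankOne_comp_rankOne] at hsq
    rw [← h] at hsq
    exact smul_left_injective 𝕜 h0 hsq

theorem rankOne_ofReal_smul_ofReal_inv_smul {r : ℝ} (hr : r ≠ 0) (c d : E) :
    rankOne 𝕜 ((r : 𝕜) • c) (((r⁻¹ : ℝ) : 𝕜) • d) = rankOne 𝕜 c d := by
  ext ξ
  rw [rankOne_apply, rankOne_apply, inner_smul_left, RCLike.conj_ofReal, smul_smul, mul_comm,
    ← mul_assoc, ← RCLike.ofReal_mul, mul_inv_cancel₀ hr, RCLike.ofReal_one, one_mul]

theorem exists_linearIsometryEquiv_rankOne_eq {a b c d : E} (hnorm : ‖a‖ * ‖b‖ = ‖c‖ * ‖d‖)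
    (hinner : ⟪b, a⟫_𝕜 = ⟪d, c⟫_𝕜) :
    ∃ V : E ≃ₗᵢ[𝕜] E, rankOne 𝕜 (V a) (V b) = rankOne 𝕜 c d := by
  by_cases hab : a = 0 ∨ b = 0
  · have hcd : ‖c‖ * ‖d‖ = 0 := by
      rw [← hnorm]
      rcases hab with rfl | rfl <;> simp
    simp only [mul_eq_zero, norm_eq_zero] at hcd
    exact ⟨.refl 𝕜 E, (rankOne_eq_zero.2 hab).trans (rankOne_eq_zero.2 hcd).symm⟩
  obtain ⟨ha, hb⟩ := not_or.1 hab
  have hc : c ≠ 0 := by rintro rfl; simp [ha, hb] at hnorm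
  set r : ℝ := ‖a‖ / ‖c‖ with hr_def
  have hr : 0 < r := by positivity
  have hac : ‖a‖ = ‖(r : 𝕜) • c‖ := by
    rw [norm_smul, RCLike.norm_ofReal, abs_of_pos hr, hr_def, div_mul_cancel₀]
    exact norm_ne_zero_iff.2 hc
  have hbd : ‖b‖ = ‖((r⁻¹ : ℝ) : 𝕜) • d‖ := by
    rw [norm_smul, RCLike.norm_ofReal, abs_of_pos (inv_pos.2 hr), hr_def, inv_div,
      div_mul_eq_mul_div, eq_div_iff (norm_ne_zero_iff.2 ha), ← hnorm, mul_comm]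
  have habcd : ⟪a, b⟫_𝕜 = ⟪(r : 𝕜) • c, ((r⁻¹ : ℝ) : 𝕜) • d⟫_𝕜 := by
    rw [inner_smul_left, inner_smul_right, RCLike.conj_ofReal, ← mul_assoc, ← RCLike.ofReal_mul,
      mul_inv_cancel₀ hr.ne', RCLike.ofReal_one, one_mul, ← inner_conj_symm, hinner,
      inner_conj_symm]
  obtain ⟨V, hVa, hVb⟩ := exists_linearIsometryEquiv_apply_eq_pair hac hbd habcd
  exact ⟨V, by rw [hVa, hVb, rankOne_ofReal_smul_ofReal_inv_smul hr.ne']⟩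

end RankOne

theorem stmt5_general (E₁ E₂ : Type) [NormedAddCommGroup E₁] [InnerProductSpace ℂ E₁]
    [NormedAddCommGroup E₂] [InnerProductSpace ℂ E₂]
    (x₁ y₁ : E₁) (x₂ y₂ : E₂) :
    (∃ U : E₁ ≃ₗᵢ[ℂ] E₂,
        ∀ ξ : E₁, U ((inner ℂ y₁ ξ : ℂ) • x₁) = (inner ℂ y₂ (U ξ) : ℂ) • x₂) ↔
      (Nonempty (E₁ ≃ₗᵢ[ℂ] E₂) ∧ ‖x₁‖ * ‖y₁‖ = ‖x₂‖ * ‖y₂‖ ∧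
        (inner ℂ y₁ x₁ : ℂ) = (inner ℂ y₂ x₂ : ℂ)) := by
  simp only [← rankOne_apply (𝕜 := ℂ), LinearIsometryEquiv.map_rankOne_apply_eq_iff]
  constructor
  · rintro ⟨U, hU⟩
    refine ⟨⟨U⟩, ?_, ?_⟩
    · simpa [U.norm_map] using congrArg norm hU
    · simpa [U.inner_map_map] using inner_eq_of_rankOne_eq_rankOne hU
  · rintro ⟨⟨W⟩, hnorm, hinner⟩
    obtain ⟨V, hV⟩ := exists_linearIsometryEquiv_rankOne_eq (𝕜 := ℂ) (a := W x₁) (b := W y₁)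
      (c := x₂) (d := y₂) (by simpa [W.norm_map] using hnorm)
      (by simpa [W.inner_map_map] using hinner)
    exact ⟨W.trans V, hV⟩

/-- Two nonzero rank-one operators `x₁⊙y₁` and `x₂⊙y₂` (where
`(x⊙y)ξ = ⟨ξ,y⟩x`, i.e. `⟪y,ξ⟫ • x` in Mathlib's convention) on Hilbert spaces `E₁, E₂` are
unitarily equivalent iff the Hilbert dimensions agree (equivalently `E₁ ≃ₗᵢ E₂`),
`‖x₁‖‖y₁‖ = ‖x₂‖‖y₂‖`, and `⟨x₁,y₁⟩ = ⟨x₂,y₂⟩`. -/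
theorem stmt5 (E₁ E₂ : Type) [NormedAddCommGroup E₁] [InnerProductSpace ℂ E₁] [CompleteSpace E₁]
    [NormedAddCommGroup E₂] [InnerProductSpace ℂ E₂] [CompleteSpace E₂]
    (x₁ y₁ : E₁) (x₂ y₂ : E₂) (h₁ : x₁ ≠ 0 ∧ y₁ ≠ 0) (h₂ : x₂ ≠ 0 ∧ y₂ ≠ 0) :
    (∃ U : E₁ ≃ₗᵢ[ℂ] E₂,
        ∀ ξ : E₁, U ((inner ℂ y₁ ξ : ℂ) • x₁) = (inner ℂ y₂ (U ξ) : ℂ) • x₂) ↔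
      (Nonempty (E₁ ≃ₗᵢ[ℂ] E₂) ∧ ‖x₁‖ * ‖y₁‖ = ‖x₂‖ * ‖y₂‖ ∧
        (inner ℂ y₁ x₁ : ℂ) = (inner ℂ y₂ x₂ : ℂ)) :=
  stmt5_general E₁ E₂ x₁ y₁ x₂ y₂

end
end

section
/- Let B be an inner function, (h_i) an orthonormal family in K_B = H² ⊖ BH², and j ≠ j′ integers. Then the functions h_i B^j and h_{i′} B^{j′} (boundary functions in L²(𝕋)) are orthogonal, and ⟨h_i B^j, h_{i′} B^j⟩ = ⟨h_i, h_{i′}⟩. Consequently (h_i B^j)_{i,j∈ℤ} is an orthonormal family in L²(𝕋). -/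
open MeasureTheory Complex Submodule
open scoped ENNReal
open scoped ComplexConjugate

noncomputable section

/-!
Since `|B| = 1` a.e., `conj (B^j) * B^j' = B^(j' - j)`, so `⟪u B^j, v B^j'⟫ = ⟪u, v B^(j' - j)⟫`.
For `j = j'` this is `⟪u, v⟫`. For `j < j'` the function `v B^(j' - j)` lies in `B H²`, because
multiplication by the inner function `B` preserves `H²`, and `B H²` is orthogonal to `K_B ∋ u`.
-/

open scoped InnerProductSpace

theorem HilbertBasis.inner_eq_zero_of_forall_or {ι 𝕜 E : Type*} [RCLike 𝕜]
    [NormedAddCommGroup E] [InnerProductSpace 𝕜 E] (b : HilbertBasis ι 𝕜 E) {x y : E}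
    (h : ∀ i, ⟪x, b i⟫_𝕜 = 0 ∨ ⟪b i, y⟫_𝕜 = 0) : ⟪x, y⟫_𝕜 = 0 := by
  rw [← b.tsum_inner_mul_inner]
  simp [fun i => mul_eq_zero.2 (h i)]

theorem MeasureTheory.MemLp.mul_of_norm_le_one {α : Type*} [MeasurableSpace α] {μ : Measure α}
    {p : ℝ≥0∞} {f w : α → ℂ} (hf : MemLp f p μ) (hw : AEStronglyMeasurable w μ)
    (hw1 : ∀ᵐ x ∂μ, ‖w x‖ ≤ 1) : MemLp (fun x => f x * w x) p μ := by
  refine hf.of_le_mul (c := 1) (hf.aestronglyMeasurable.mul hw) ?_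
  filter_upwards [hw1] with x hx
  rw [norm_mul, one_mul]
  exact mul_le_of_le_one_right (norm_nonneg _) hx

theorem coeFn_toL2 {g : 𝕋m → ℂ} (hg : MemLp g 2 μT) : ⇑(toL2 g) =ᵐ[μT] g := by
  rw [toL2, dif_pos hg]
  exact hg.coeFn_toLp

theorem toL2_coeFn (f : L2) : toL2 ⇑f = f := by
  rw [toL2, dif_pos (Lp.memLp f)]
  exact Lp.toLp_coeFn f _

theorem toL2_congr_ae {g₁ g₂ : 𝕋m → ℂ} (hg : MemLp g₁ 2 μT) (hfg : g₁ =ᵐ[μT] g₂) :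
    toL2 g₁ = toL2 g₂ := by
  rw [toL2, toL2, dif_pos hg, dif_pos (hg.ae_eq hfg)]
  exact MemLp.toLp_congr _ _ hfg

theorem inner_fourierLp_eq_fourierCoeff (f : L2) (n : ℤ) :
    ⟪fourierLp 2 n, f⟫_ℂ = fourierCoeff (⇑f) n := by
  rw [← fourierBasis_repr, HilbertBasis.repr_apply_apply, coe_fourierBasis]

theorem mem_H2_iff {f : L2} : f ∈ H2 ↔ ∀ n < 0, fourierCoeff (⇑f) n = 0 := by
  rw [H2, negSpan, ← Submodule.span_singleton_le_iff_mem, ← Submodule.isOrtho_iff_le,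
    Submodule.isOrtho_comm, Submodule.isOrtho_span]
  simp only [Set.mem_ofPred_eq, Set.mem_singleton_iff, forall_eq, forall_exists_index, and_imp]
  refine ⟨fun h n hn => ?_, fun h _ n hn hu => ?_⟩
  · rw [← inner_fourierLp_eq_fourierCoeff]
    exact h n hn rfl
  · rw [hu, inner_fourierLp_eq_fourierCoeff]
    exact h n hn

theorem memLp_mul_zpow {B : L2} (hB1 : ∀ᵐ x ∂μT, ‖B x‖ = 1) (f : L2) (j : ℤ) :
    MemLp (fun x => f x * B x ^ j) 2 μT := by
  refine (Lp.memLp f).mul_of_norm_le_one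
    ((Lp.aestronglyMeasurable B).aemeasurable.pow_const j).aestronglyMeasurable ?_
  filter_upwards [hB1] with x hx
  rw [norm_zpow, hx, one_zpow]

theorem conj_zpow_mul_zpow_of_norm_eq_one {z : ℂ} (hz : ‖z‖ = 1) (j j' : ℤ) :
    conj z ^ j * z ^ j' = z ^ (j' - j) := by
  have hz0 : z ≠ 0 := norm_ne_zero_iff.1 (hz.symm ▸ one_ne_zero)
  rw [← RCLike.inv_eq_conj hz, inv_zpow', ← zpow_add₀ hz0, neg_add_eq_sub]

theorem inner_toL2_mul_zpow {B : L2} (hB1 : ∀ᵐ x ∂μT, ‖B x‖ = 1) (u v : L2) (j j' : ℤ) :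
    ⟪toL2 (fun x => u x * B x ^ j), toL2 (fun x => v x * B x ^ j')⟫_ℂ
      = ⟪u, toL2 (fun x => v x * B x ^ (j' - j))⟫_ℂ := by
  rw [L2.inner_def, L2.inner_def]
  refine integral_congr_ae ?_
  filter_upwards [coeFn_toL2 (memLp_mul_zpow hB1 u j), coeFn_toL2 (memLp_mul_zpow hB1 v j'),
    coeFn_toL2 (memLp_mul_zpow hB1 v (j' - j)), hB1] with x hu hv hv' hx
  simp only [RCLike.inner_apply, hu, hv, hv', map_mul, map_zpow₀,
    ← conj_zpow_mul_zpow_of_norm_eq_one hx]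
  ring

theorem toL2_mul_zpow_zero (B f : L2) : toL2 (fun x => f x * B x ^ (0 : ℤ)) = f := by
  simp only [zpow_zero, mul_one]
  exact toL2_coeFn f

theorem toL2_mul_zpow_add_one {B : L2} (hB1 : ∀ᵐ x ∂μT, ‖B x‖ = 1) (f : L2) (k : ℤ) :
    toL2 (fun x => f x * B x ^ (k + 1))
      = toL2 (fun x => B x * toL2 (fun x => f x * B x ^ k) x) := by
  refine toL2_congr_ae (memLp_mul_zpow hB1 f (k + 1)) ?_
  filter_upwards [coeFn_toL2 (memLp_mul_zpow hB1 f k), hB1] with x hfx hx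
  rw [hfx, zpow_add_one₀ (norm_ne_zero_iff.1 (hx.symm ▸ one_ne_zero))]
  ring

theorem toL2_mul_mem_H2 {B f : L2} (hB : IsInner B) (hf : f ∈ H2) :
    toL2 (fun x => B x * f x) ∈ H2 := by
  obtain ⟨hBH2, hB1⟩ := hB
  have hB1' : ∀ᵐ x ∂μT, ‖B x‖ ≤ 1 := hB1.mono fun _ hx => hx.le
  have hBf : MemLp (fun x => B x * f x) 2 μT := by
    simpa only [mul_comm] using
      (Lp.memLp f).mul_of_norm_le_one (Lp.aestronglyMeasurable B) hB1'
  rw [mem_H2_iff]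
  intro n hn
  have hw : MemLp (fun x => fourierLp 2 n x * conj (B x)) 2 μT :=
    (Lp.memLp _).mul_of_norm_le_one
      (Complex.continuous_conj.comp_aestronglyMeasurable (Lp.aestronglyMeasurable B))
      (by simpa only [Function.comp_apply, RCLike.norm_conj] using hB1')
  set w : L2 := toL2 (fun x => fourierLp 2 n x * conj (B x))
  have hw_fourier (k : ℤ) : ⟪w, fourierLp 2 k⟫_ℂ = fourierCoeff (⇑B) (n - k) := by
    rw [L2.inner_def, fourierCoeff]
    refine integral_congr_ae ?_
    filter_upwards [coeFn_toL2 hw, coeFn_fourierLp 2 n, coeFn_fourierLp 2 k] with x hwx hn hk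
    rw [RCLike.inner_apply, hwx, hn, hk, neg_sub, sub_eq_add_neg, fourier_add, fourier_neg,
      smul_eq_mul, map_mul, Complex.conj_conj]
    ring
  have hBf_coeff : fourierCoeff (⇑(toL2 fun x => B x * f x)) n = ⟪w, f⟫_ℂ := by
    rw [← inner_fourierLp_eq_fourierCoeff, L2.inner_def, L2.inner_def]
    refine integral_congr_ae ?_
    filter_upwards [coeFn_toL2 hw, coeFn_toL2 hBf] with x hwx hBfx
    rw [RCLike.inner_apply, RCLike.inner_apply, hwx, hBfx, map_mul, Complex.conj_conj]
    ring
  rw [hBf_coeff]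
  -- `w = conj B · zⁿ` has no Fourier coefficients at frequencies `k ≥ 0`, and `f` none at `k < 0`.
  refine fourierBasis.inner_eq_zero_of_forall_or fun k => ?_
  rw [coe_fourierBasis]
  rcases lt_or_ge k 0 with hk | hk
  · exact .inr ((inner_fourierLp_eq_fourierCoeff f k).trans (mem_H2_iff.1 hf k hk))
  · exact .inl ((hw_fourier k).trans (mem_H2_iff.1 hBH2 _ (by omega)))

theorem toL2_mul_zpow_mem_H2 {B f : L2} (hB : IsInner B) (hf : f ∈ H2) {k : ℤ} (hk : 0 ≤ k) :
    toL2 (fun x => f x * B x ^ k) ∈ H2 := by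
  induction k, hk using Int.leInduction with
  | base => rwa [toL2_mul_zpow_zero]
  | succ k _ ih => rw [toL2_mul_zpow_add_one hB.2]; exact toL2_mul_mem_H2 hB ih

theorem toL2_mul_zpow_mem_SH2 {B f : L2} (hB : IsInner B) (hf : f ∈ H2) {k : ℤ} (hk : 0 < k) :
    toL2 (fun x => f x * B x ^ k) ∈ SH2 B := by
  obtain ⟨k, rfl⟩ : ∃ k', k = k' + 1 := ⟨k - 1, by ring⟩
  rw [toL2_mul_zpow_add_one hB.2]
  exact Submodule.subset_span ⟨_, toL2_mul_zpow_mem_H2 hB hf (by omega), rfl⟩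

theorem inner_toL2_mul_zpow_eq_zero_of_lt {B u v : L2} (hB : IsInner B) (hu : u ∈ Ksp B)
    (hv : v ∈ Ksp B) {j j' : ℤ} (hjj' : j < j') :
    ⟪toL2 (fun x => u x * B x ^ j), toL2 (fun x => v x * B x ^ j')⟫_ℂ = 0 := by
  have hv_H2 : v ∈ H2 := Submodule.orthogonal_le le_sup_left hv
  rw [inner_toL2_mul_zpow hB.2]
  exact Submodule.inner_left_of_mem_orthogonal
    (Submodule.mem_sup_right (toL2_mul_zpow_mem_SH2 hB hv_H2 (sub_pos.2 hjj'))) hu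

/-- For an inner function `B`, an orthonormal family `(h_i)` in `K_B`, and
`j ≠ j'`, the functions `h_i B^j` and `h_{i'} B^{j'}` are orthogonal in `L²(𝕋)`, while
`⟪h_i B^j, h_{i'} B^j⟫ = ⟪h_i, h_{i'}⟫`; consequently `(h_i B^j)` is orthonormal. -/
theorem stmt6 (B : L2) (hB : IsInner B) {ι : Type} (h : ι → L2) (hmem : ∀ i, h i ∈ Ksp B)
    (hon : Orthonormal ℂ h) (g : ι × ℤ → L2)
    (hg : ∀ p : ι × ℤ, g p = toL2 (fun x => h p.1 x * B x ^ p.2)) :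
    (∀ (i i' : ι) (j j' : ℤ), j ≠ j' → (inner ℂ (g (i, j)) (g (i', j')) : ℂ) = 0) ∧
    (∀ (i i' : ι) (j : ℤ), (inner ℂ (g (i, j)) (g (i', j)) : ℂ) = (inner ℂ (h i) (h i') : ℂ)) ∧
    Orthonormal ℂ g := by
  classical
  have h_ne : ∀ (i i' : ι) (j j' : ℤ), j ≠ j' → ⟪g (i, j), g (i', j')⟫_ℂ = 0 := by
    intro i i' j j' hjj'
    rcases hjj'.lt_or_gt with hlt | hgt
    · rw [hg, hg]
      exact inner_toL2_mul_zpow_eq_zero_of_lt hB (hmem i) (hmem i') hlt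
    · rw [← inner_conj_symm, hg, hg, inner_toL2_mul_zpow_eq_zero_of_lt hB (hmem i') (hmem i) hgt,
        map_zero]
  have h_eq : ∀ (i i' : ι) (j : ℤ), ⟪g (i, j), g (i', j)⟫_ℂ = ⟪h i, h i'⟫_ℂ := by
    intro i i' j
    rw [hg, hg, inner_toL2_mul_zpow hB.2, sub_self, toL2_mul_zpow_zero]
  refine ⟨h_ne, h_eq, orthonormal_iff_ite.2 ?_⟩
  rintro ⟨i, j⟩ ⟨i', j'⟩
  obtain rfl | hjj' := eq_or_ne j j'
  · simp [h_eq, orthonormal_iff_ite.1 hon]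
  · simp [h_ne i i' j j' hjj', hjj']
end
end
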